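/- Let p be an odd prime and let λ be a JM-partition of n. Let α := (λ'(0))', where λ'(0) is the 0-th term of the p-adic expansion of the conjugate partition λ' (so α is the first component of Φ(λ) = ((λ'(0))' | λ' − λ'(0)), the partition obtained from λ by stripping off all vertical p-hooks). Then α is a p-regular partition and α is a JM-partition. -/

import Mathlib

/-- A partition, encoded as the weakly decreasing, eventually zero sequence of its parts. -/
def IsPartition (f : ℕ → ℕ) : Prop :=
  Antitone f ∧ ∃ N, ∀ i, N ≤ i → f i = 0

/-- `f` is a partition of `n`. -/
def IsPartitionOf (n : ℕ) (f : ℕ → ℕ) : Prop :=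
  IsPartition f ∧ ∃ N, (∀ i, N ≤ i → f i = 0) ∧ ∑ i ∈ Finset.range N, f i = n

/-- A partition is `p`-restricted if successive parts differ by at most `p - 1`. -/
def IsPRestricted (p : ℕ) (f : ℕ → ℕ) : Prop :=
  IsPartition f ∧ ∀ i, f i - f (i + 1) ≤ p - 1

/-- `c` is a `p`-adic expansion of the partition `f`. -/
def IsPAdicExpansion (p : ℕ) (f : ℕ → ℕ) (c : ℕ → ℕ → ℕ) : Prop :=
  (∀ i, IsPRestricted p (c i)) ∧
  ∃ N, (∀ i j, N ≤ i → c i j = 0) ∧ ∀ j, f j = ∑ i ∈ Finset.range N, p ^ i * c i j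

/-- The conjugate partition. -/
noncomputable def conjugate (f : ℕ → ℕ) : ℕ → ℕ :=
  fun j => Nat.card {i : ℕ | j < f i}

/-- Hook length of the node `(i, j)` (0-indexed). -/
noncomputable def hookLength (f : ℕ → ℕ) (i j : ℕ) : ℕ :=
  (f i - (j + 1)) + (conjugate f j - (i + 1)) + 1

/-- `f` is a JM-partition for the prime `p`. -/
def IsJM (p : ℕ) (f : ℕ → ℕ) : Prop :=
  ¬ ∃ a b x y : ℕ, b < f a ∧ y < f a ∧ b < f x ∧
      0 < padicValNat p (hookLength f a b) ∧
      padicValNat p (hookLength f x b) ≠ padicValNat p (hookLength f a b) ∧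
      padicValNat p (hookLength f a y) ≠ padicValNat p (hookLength f a b)

/-- A partition is `p`-singular if it has `p` consecutive equal nonzero parts. -/
def IsPSingular (p : ℕ) (f : ℕ → ℕ) : Prop :=
  ∃ i, 0 < f (i + p - 1) ∧ f i = f (i + p - 1)

/-- A partition is `p`-regular if it is not `p`-singular. -/
def IsPRegular (p : ℕ) (f : ℕ → ℕ) : Prop := ¬ IsPSingular p f

/-!
Put `μ = conjugate f` and `g = c' 0`, so that the differences of consecutive parts of `g` are
those of `μ` reduced mod `p`. Regularity of `conjugate g` is the conjugate form of `g` being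
`p`-restricted, and since the JM property is invariant under conjugation it suffices to show that
`g` is JM.

If no difference of `μ` reaches `p`, then `g = μ`. Otherwise let `J` be the last row where it
does. Below `J` the partitions `g` and `μ` agree, together with their hook lengths. In row `J`
of `μ` the hooks of lengths `p` and `p - 1` force, by the JM condition, every difference of `μ`
above `J` to be `≡ -1 (mod p)`. So rows `0, …, J` of `g` form a staircase with steps `p - 1`,
along which hook lengths change by multiples of `p`; each hook there is thereby congruent to one
not divisible by `p`, and the JM condition for `g` is only tested in rows below `J`.
-/

variable {p : ℕ} {f g μ : ℕ → ℕ}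

lemma hookLength_pos (f : ℕ → ℕ) (i j : ℕ) : 0 < hookLength f i j := by
  unfold hookLength; omega

lemma padicValNat_pos_of_dvd {n : ℕ} (hp : p ≠ 1) (hn : n ≠ 0) (h : p ∣ n) :
    0 < padicValNat p n :=
  Nat.pos_of_ne_zero fun h0 => by
    rcases padicValNat.eq_zero_iff.mp h0 with h1 | h1 | h1 <;> contradiction

lemma conjugate_eq_of_forall_lt_iff {j m : ℕ} (h : ∀ i, j < f i ↔ i < m) :
    conjugate f j = m := by
  have hset : {i | j < f i} = Set.Iio m := Set.ext h
  simp [conjugate, hset]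

namespace IsPartition

variable (hf : IsPartition f)
include hf

lemma lt_conjugate_iff {i j : ℕ} : i < conjugate f j ↔ j < f i := by
  obtain ⟨hanti, N, hN⟩ := hf
  classical
  have hex : ∃ i, f i ≤ j := ⟨N, by simp [hN N le_rfl]⟩
  have key : ∀ i, j < f i ↔ i < Nat.find hex := fun i => by
    rw [Nat.lt_find_iff]
    exact ⟨fun h m hm => not_le.2 (h.trans_le (hanti hm)), fun h => not_le.1 (h i le_rfl)⟩
  rw [conjugate_eq_of_forall_lt_iff key, key]

lemma conjugate_conjugate : conjugate (conjugate f) = f :=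
  funext fun _ => conjugate_eq_of_forall_lt_iff fun _ => hf.lt_conjugate_iff

lemma hookLength_conjugate (i j : ℕ) :
    hookLength (conjugate f) i j = hookLength f j i := by
  unfold hookLength
  rw [hf.conjugate_conjugate]
  omega

lemma conjugate_eq_succ {k c : ℕ} (hlow : f (k + 1) ≤ c) (hc : c < f k) :
    conjugate f c = k + 1 :=
  conjugate_eq_of_forall_lt_iff fun i =>
    ⟨fun h => by by_contra! hi; have := hf.1 (show k + 1 ≤ i by omega); omega,
     fun h => hc.trans_le (hf.1 (show i ≤ k by omega))⟩

lemma hookLength_eq_sub {k c : ℕ} (hlow : f (k + 1) ≤ c) (hc : c < f k) :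
    hookLength f k c = f k - c := by
  unfold hookLength
  rw [hf.conjugate_eq_succ hlow hc]
  omega

lemma not_dvd_hookLength {k c : ℕ} (hlow : f (k + 1) ≤ c) (hc : c < f k) (hlt : f k - c < p) :
    ¬ p ∣ hookLength f k c := by
  rw [hf.hookLength_eq_sub hlow hc]
  exact Nat.not_dvd_of_pos_of_lt (by omega) hlt

lemma hookLength_eq_hookLength_succ_add {k c : ℕ} (hc : c < f (k + 1)) :
    hookLength f k c = hookLength f (k + 1) c + (f k - f (k + 1)) + 1 := by
  have := hf.lt_conjugate_iff.2 hc
  have := hf.1 (show k ≤ k + 1 by omega)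
  unfold hookLength
  omega

end IsPartition

lemma isPartition_conjugate (hf : IsPartition f) : IsPartition (conjugate f) := by
  refine ⟨fun j j' hjj' => ?_, f 0, fun j hj => ?_⟩
  · by_contra! h
    have := hf.lt_conjugate_iff.1 h
    have := hf.lt_conjugate_iff.2 (hjj'.trans_lt this)
    omega
  · by_contra h
    have := hf.lt_conjugate_iff.1 (Nat.pos_of_ne_zero h)
    omega

lemma isJM_conjugate (hf : IsPartition f) (h : IsJM p f) : IsJM p (conjugate f) := by
  rintro ⟨a, b, x, y, hb, hy, hx, hval, hxne, hyne⟩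
  simp only [hf.hookLength_conjugate] at hval hxne hyne
  exact h ⟨b, a, y, x, hf.lt_conjugate_iff.1 hb, hf.lt_conjugate_iff.1 hx,
    hf.lt_conjugate_iff.1 hy, hval, hyne, hxne⟩

lemma IsPRestricted.isPRegular_conjugate (hp : 1 < p) (hg : IsPRestricted p g) :
    IsPRegular p (conjugate g) := by
  rintro ⟨i, hpos, heq⟩
  set m := conjugate g (i + p - 1)
  have hlast : i + p - 1 < g (m - 1) := hg.1.lt_conjugate_iff.1 (by omega)
  have hnext : ¬ i < g m := fun h => (hg.1.lt_conjugate_iff.2 h).ne heq.symm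
  have hdrop := hg.2 (m - 1)
  rw [Nat.sub_add_cancel (by omega : 1 ≤ m)] at hdrop
  omega

lemma IsPAdicExpansion.sub_succ_eq_mod {c : ℕ → ℕ → ℕ} (hp : 0 < p)
    (h : IsPAdicExpansion p f c) (j : ℕ) :
    c 0 j - c 0 (j + 1) = (f j - f (j + 1)) % p := by
  obtain ⟨hres, N, hvan, hsum⟩ := h
  set r : ℕ → ℕ := fun j => ∑ i ∈ Finset.range N, p ^ i * c (i + 1) j
  have hsplit : ∀ j, f j = c 0 j + p * r j := fun j => by
    have hN : f j = ∑ i ∈ Finset.range (N + 1), p ^ i * c i j := by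
      rw [Finset.sum_range_succ, hvan N j le_rfl, mul_zero, add_zero, hsum]
    rw [hN, Finset.sum_range_succ', Finset.mul_sum, add_comm]
    simp [pow_succ', mul_assoc]
  have hr : r (j + 1) ≤ r j := Finset.sum_le_sum fun i _ =>
    Nat.mul_le_mul_left _ ((hres (i + 1)).1.1 (Nat.le_succ j))
  have hc0 : c 0 (j + 1) ≤ c 0 j := (hres 0).1.1 (Nat.le_succ j)
  have hlt : c 0 j - c 0 (j + 1) < p := by have := (hres 0).2 j; omega
  have hdiff : f j - f (j + 1) = c 0 j - c 0 (j + 1) + p * (r j - r (j + 1)) := by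
    rw [hsplit j, hsplit (j + 1), Nat.mul_sub]
    have := Nat.mul_le_mul_left p hr
    omega
  rw [hdiff, Nat.add_mul_mod_self_left, Nat.mod_eq_of_lt hlt]

def IsLastLargeDrop (p : ℕ) (μ : ℕ → ℕ) (J : ℕ) : Prop :=
  p ≤ μ J - μ (J + 1) ∧ ∀ k, J < k → μ k - μ (k + 1) < p

lemma IsPartition.exists_isLastLargeDrop (hp : 0 < p) (hμ : IsPartition μ)
    (h : ∃ k, p ≤ μ k - μ (k + 1)) : ∃ J, IsLastLargeDrop p μ J := by
  obtain ⟨N, hN⟩ := hμ.2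
  have hbdd : BddAbove {k | p ≤ μ k - μ (k + 1)} :=
    ⟨N, fun k hk => by by_contra! hkN; simp [hN k hkN.le] at hk; omega⟩
  refine ⟨sSup {k | p ≤ μ k - μ (k + 1)}, Nat.sSup_mem h hbdd, fun k hk => ?_⟩
  by_contra! hlarge
  exact (le_csSup hbdd hlarge).not_gt hk

lemma IsPartition.hookLength_eq_add_mul (hp : 0 < p) (hf : IsPartition f) {a a' b : ℕ}
    (ha : a ≤ a') (hstair : ∀ k, a ≤ k → k < a' → f k - f (k + 1) = p - 1) (hb : b < f a') :
    hookLength f a b = hookLength f a' b + (a' - a) * p := by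
  induction a', ha using Nat.le_induction with
  | base => simp
  | succ a' ha ih =>
    have hstep := hf.hookLength_eq_hookLength_succ_add hb
    rw [hstair a' ha (Nat.lt_succ_self a')] at hstep
    rw [ih (fun k hk hk' => hstair k hk (by omega)) (hb.trans_le (hf.1 (Nat.le_succ a'))),
      hstep, Nat.succ_sub ha, Nat.succ_mul]
    omega

lemma IsJM.sub_succ_mod_eq_pred (hp : 1 < p) (hμ : IsPartition μ) (hJM : IsJM p μ) {J : ℕ}
    (hJ : μ (J + 1) + p ≤ μ J) {k : ℕ} (hk : k < J) : (μ k - μ (k + 1)) % p = p - 1 := by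
  set c := μ J - p
  have hcorner : hookLength μ J c = p := by
    rw [hμ.hookLength_eq_sub (by omega) (by omega)]; omega
  have hnext : ¬ p ∣ hookLength μ J (c + 1) :=
    hμ.not_dvd_hookLength (by omega) (by omega) (by omega)
  -- By the JM condition in row `J`, every hook of column `c` above row `J` has valuation 1.
  have hcol : ∀ x ≤ J, p ∣ hookLength μ x c := fun x hx => by
    by_contra hx'
    refine hJM ⟨J, c, x, c + 1, by omega, by omega, by have := hμ.1 hx; omega, ?_, ?_, ?_⟩ <;>
      simp only [hcorner, padicValNat.self hp, padicValNat.eq_zero_of_not_dvd hx',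
        padicValNat.eq_zero_of_not_dvd hnext] <;> omega
  have hstep := hμ.hookLength_eq_hookLength_succ_add (k := k) (c := c)
    (by have := hμ.1 (show k + 1 ≤ J by omega); omega)
  have hdvd : p ∣ μ k - μ (k + 1) + 1 := by
    refine (Nat.dvd_add_right (hcol (k + 1) (by omega))).1 ?_
    rw [← add_assoc, ← hstep]
    exact hcol k hk.le
  have hmod : μ k - μ (k + 1) ≡ p - 1 [MOD p] :=
    Nat.ModEq.add_right_cancel' 1 <| by
      rw [Nat.sub_add_cancel hp.le]
      exact (Nat.modEq_zero_iff_dvd.2 hdvd).trans (Nat.modEq_zero_iff_dvd.2 dvd_rfl).symm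
  rw [hmod, Nat.mod_eq_of_lt (by omega)]

lemma IsPartition.exists_not_dvd_hookLength (hμ : IsPartition μ) {J j : ℕ}
    (hlast : IsLastLargeDrop p μ J) (hj : j < μ (J + 1)) :
    ∃ x, J < x ∧ j < μ x ∧ ¬ p ∣ hookLength μ x j := by
  have hlen := hμ.lt_conjugate_iff.2 hj
  set x := conjugate μ j - 1
  have hx : x + 1 = conjugate μ j := by omega
  have hbelow : ¬ j < μ (x + 1) := fun h => (hμ.lt_conjugate_iff.2 h).ne hx
  have hsmall := hlast.2 x (by omega)
  refine ⟨x, by omega, hμ.lt_conjugate_iff.1 (by omega), hμ.not_dvd_hookLength (by omega)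
    (hμ.lt_conjugate_iff.1 (by omega)) (by omega)⟩

lemma IsJM.not_dvd_hookLength_of_isLastLargeDrop (hp : 1 < p) (hμ : IsPartition μ)
    (hJM : IsJM p μ) {J j : ℕ} (hlast : IsLastLargeDrop p μ J) (hj : j < μ (J + 1)) :
    ¬ p ∣ hookLength μ J j := by
  intro hdvd
  obtain ⟨x, -, hx, hnot⟩ := hμ.exists_not_dvd_hookLength hlast hj
  have hJ := hlast.1
  have hedge : ¬ p ∣ hookLength μ J (μ J - (p - 1)) :=
    hμ.not_dvd_hookLength (by omega) (by omega) (by omega)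
  have hpos := padicValNat_pos_of_dvd hp.ne' (hookLength_pos μ J j).ne' hdvd
  refine hJM ⟨J, j, x, μ J - (p - 1), by omega, by omega, hx, hpos, ?_, ?_⟩ <;>
    simp only [padicValNat.eq_zero_of_not_dvd hnot, padicValNat.eq_zero_of_not_dvd hedge] <;>
    omega

section DropsModP

variable (hμ : IsPartition μ) (hg : IsPartition g)
  (hdrop : ∀ j, g j - g (j + 1) = (μ j - μ (j + 1)) % p)
include hμ hg hdrop

lemma eq_of_forall_sub_succ_lt {K : ℕ} (hsmall : ∀ k, K ≤ k → μ k - μ (k + 1) < p) :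
    ∀ k, K ≤ k → g k = μ k := by
  obtain ⟨N, hN⟩ := hμ.2
  obtain ⟨M, hM⟩ := hg.2
  suffices ∀ t k, K ≤ k → N + M ≤ k + t → g k = μ k from
    fun k hk => this (N + M) k hk (by omega)
  intro t
  induction t with
  | zero => intro k _ hk; rw [hN k (by omega), hM k (by omega)]
  | succ t ih =>
    intro k hk hkt
    have hnext := ih (k + 1) (by omega) (by omega)
    have hdk := hdrop k
    rw [Nat.mod_eq_of_lt (hsmall k hk)] at hdk
    have := hg.1 (Nat.le_add_right k 1)
    have := hμ.1 (Nat.le_add_right k 1)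
    omega

variable {J : ℕ} (hlast : IsLastLargeDrop p μ J)
include hlast

lemma eq_of_isLastLargeDrop_lt {k : ℕ} (hk : J < k) : g k = μ k :=
  eq_of_forall_sub_succ_lt hμ hg hdrop hlast.2 k hk

lemma conjugate_eq_of_lt_isLastLargeDrop {b : ℕ} (hb : b < μ (J + 1)) :
    conjugate g b = conjugate μ b := by
  have hgJ : g (J + 1) = μ (J + 1) := eq_of_isLastLargeDrop_lt hμ hg hdrop hlast (by omega)
  refine congrArg Nat.card (congrArg _ (Set.ext fun i => ?_))
  rcases le_or_gt i J with hi | hi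
  · have := hg.1 (show i ≤ J + 1 by omega)
    have := hμ.1 (show i ≤ J + 1 by omega)
    show b < g i ↔ b < μ i
    omega
  · show b < g i ↔ b < μ i
    rw [eq_of_isLastLargeDrop_lt hμ hg hdrop hlast hi]

lemma hookLength_eq_of_isLastLargeDrop_lt {a b : ℕ} (ha : J < a) (hb : b < g a) :
    hookLength g a b = hookLength μ a b := by
  have hga := eq_of_isLastLargeDrop_lt hμ hg hdrop hlast ha
  have := hμ.1 (show J + 1 ≤ a by omega)
  unfold hookLength
  rw [hga, conjugate_eq_of_lt_isLastLargeDrop hμ hg hdrop hlast (by omega)]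

variable (hp : 1 < p) (hJM : IsJM p μ)
include hp hJM

lemma not_dvd_hookLength_of_le_isLastLargeDrop {a b : ℕ} (ha : a ≤ J) (hb : b < g a) :
    ¬ p ∣ hookLength g a b := by
  have hstair : ∀ k, a ≤ k → k < J → g k - g (k + 1) = p - 1 := fun k _ hk => by
    have := hμ.1 (Nat.le_add_right J 1)
    rw [hdrop, hJM.sub_succ_mod_eq_pred hp hμ (by have := hlast.1; omega) hk]
  have hgJ : g (J + 1) = μ (J + 1) := eq_of_isLastLargeDrop_lt hμ hg hdrop hlast (by omega)
  rcases lt_or_ge b (μ (J + 1)) with hbJ | hbJ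
  · -- The column of `b` reaches below row `J`, where `g` and `μ` agree.
    have := hμ.1 (Nat.le_add_right J 1)
    have := hg.1 (Nat.le_add_right J 1)
    have := hdrop J
    have := Nat.mod_le (μ J - μ (J + 1)) p
    have hgJb : b < g J := by omega
    have hμJ : hookLength μ J b = hookLength g J b + (μ J - g J) := by
      unfold hookLength
      rw [conjugate_eq_of_lt_isLastLargeDrop hμ hg hdrop hlast hbJ]
      omega
    have hmod : p ∣ μ J - g J := by
      convert Nat.dvd_sub_mod (n := p) (μ J - μ (J + 1)) using 1
      omega
    rw [hg.hookLength_eq_add_mul (by omega) ha hstair hgJb]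
    intro hdvd
    refine hJM.not_dvd_hookLength_of_isLastLargeDrop hp hμ hlast hbJ ?_
    rw [hμJ]
    exact dvd_add ((Nat.dvd_add_left (dvd_mul_left p _)).1 hdvd) hmod
  · -- The column of `b` ends in some row `L ≤ J`, at a node with hook length below `p`.
    set L := conjugate g b - 1
    have hlen := hg.lt_conjugate_iff.2 hb
    have hLJ : L ≤ J := by
      by_contra! h
      have := hg.lt_conjugate_iff.1 (show J + 1 < conjugate g b by omega)
      omega
    have hbL : b < g L := hg.lt_conjugate_iff.1 (by omega)
    have hbelow : g (L + 1) ≤ b :=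
      not_lt.1 fun h => (hg.lt_conjugate_iff.2 h).ne (by omega)
    have hsmall : g L - g (L + 1) < p := hdrop L ▸ Nat.mod_lt _ (by omega)
    rw [hg.hookLength_eq_add_mul (by omega) (show a ≤ L by omega)
      (fun k hk hkL => hstair k hk (by omega)) hbL, Nat.dvd_add_left (dvd_mul_left p _)]
    exact hg.not_dvd_hookLength hbelow hbL (by omega)

end DropsModP

theorem IsJM.of_sub_succ_eq_mod (hp : 1 < p) (hμ : IsPartition μ) (hJM : IsJM p μ)
    (hg : IsPartition g) (hdrop : ∀ j, g j - g (j + 1) = (μ j - μ (j + 1)) % p) : IsJM p g := by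
  by_cases hlarge : ∃ k, p ≤ μ k - μ (k + 1)
  · obtain ⟨J, hlast⟩ := hμ.exists_isLastLargeDrop (by omega) hlarge
    rintro ⟨a, b, x, y, hb, hy, -, hval, -, hyne⟩
    rcases le_or_gt a J with ha | ha
    · exact not_dvd_hookLength_of_le_isLastLargeDrop hμ hg hdrop hlast hp hJM ha hb
        (dvd_of_one_le_padicValNat hval)
    · -- Row `a` of `g` is a row of `μ`, and there the JM condition is inherited.
      rw [hookLength_eq_of_isLastLargeDrop_lt hμ hg hdrop hlast ha hb,
        hookLength_eq_of_isLastLargeDrop_lt hμ hg hdrop hlast ha hy] at *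
      have hga := eq_of_isLastLargeDrop_lt hμ hg hdrop hlast ha
      have hbJ : b < μ (J + 1) := by have := hμ.1 (show J + 1 ≤ a by omega); omega
      obtain ⟨x₀, -, hx₀, hnot⟩ := hμ.exists_not_dvd_hookLength hlast hbJ
      exact hJM ⟨a, b, x₀, y, hga ▸ hb, hga ▸ hy, hx₀, hval,
        by rw [padicValNat.eq_zero_of_not_dvd hnot]; omega, hyne⟩
  · simp only [not_exists, not_le] at hlarge
    have hgμ : g = μ := funext fun k => eq_of_forall_sub_succ_lt hμ hg hdrop
      (fun k _ => hlarge k) k (Nat.zero_le k)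
    exact hgμ ▸ hJM

theorem first_component_of_Phi_pRegular_JM_general (p : ℕ) (hp : p.Prime)
    (n : ℕ) (f : ℕ → ℕ) (hf : IsPartitionOf n f) (hJM : IsJM p f)
    (c' : ℕ → ℕ → ℕ) (hc' : IsPAdicExpansion p (conjugate f) c') :
    IsPRegular p (conjugate (c' 0)) ∧ IsJM p (conjugate (c' 0)) := by
  have hpart : IsPartition f := hf.1
  have hrestr : IsPRestricted p (c' 0) := hc'.1 0
  refine ⟨hrestr.isPRegular_conjugate hp.one_lt, isJM_conjugate hrestr.1 ?_⟩
  exact (isJM_conjugate hpart hJM).of_sub_succ_eq_mod hp.one_lt (isPartition_conjugate hpart)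
    hrestr.1 (hc'.sub_succ_eq_mod hp.pos)

/-- For an odd prime `p` and a JM-partition `f` of `n`, the partition
`α = (λ'(0))'` (the first component of `Φ(f)`, obtained from `f` by stripping off all
vertical `p`-hooks) is a `p`-regular JM-partition. -/
theorem first_component_of_Phi_pRegular_JM (p : ℕ) (hp : p.Prime) (hodd : Odd p)
    (n : ℕ) (f : ℕ → ℕ) (hf : IsPartitionOf n f) (hJM : IsJM p f)
    (c' : ℕ → ℕ → ℕ) (hc' : IsPAdicExpansion p (conjugate f) c') :
    IsPRegular p (conjugate (c' 0)) ∧ IsJM p (conjugate (c' 0)) :=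
  first_component_of_Phi_pRegular_JM_general p hp n f hf hJM c' hc'
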